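/- arXiv:1510.07788 — 2 statements merged into one kernel-verified Lean document; each statement's English description precedes it below -/
import Mathlib

section
/- Let 0 < ε < 1/6, d ≥ 1, δ > 0, and let A be a finite set with probability measure ν and a graph structure such that for every subset X with ε < ν(X) < 1−ε one has ν(B_d(X)) > (1+δ)ν(X) (A is (d,ε,δ)-expanding). Then there exists Y ⊆ A with ν(Y) ≤ ε such that in the induced structure A' = A − Y (with renormalized measure ν'), every X ⊆ A' with ν'(X) ≤ 1/2 satisfies ν'(B_d^{A'}(X) \ X) ≥ δ·ν'(X), where B_d^{A'} denotes d-neighborhood in the induced graph on A'. -/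
open Finset

/-- The closed `d`-neighborhood of a set `X` in a graph `G`. -/
def gball {V : Type*} (G : SimpleGraph V) (X : Set V) (d : ℕ) : Set V :=
  {v | ∃ x ∈ X, ∃ p : G.Walk x v, p.length ≤ d}

/-- The closed `d`-neighborhood of `X` in the subgraph of `G` induced on the
complement of `Y` (walks avoiding `Y`). -/
def gballAvoid {V : Type*} (G : SimpleGraph V) (Y X : Set V) (d : ℕ) : Set V :=
  {v | v ∉ Y ∧ ∃ x ∈ X, ∃ p : G.Walk x v, p.length ≤ d ∧ ∀ u ∈ p.support, u ∉ Y}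

/-- Measure of a set of vertices, given by a weight function. -/
noncomputable def nuu {V : Type*} [Fintype V] (w : V → ℝ) (A : Set V) : ℝ :=
  ∑ x, A.indicator w x

section aux

variable {V : Type*} [Fintype V] {w : V → ℝ}

lemma nuu_nonneg (hw0 : ∀ v, 0 ≤ w v) (A : Set V) : 0 ≤ nuu w A :=
  Finset.sum_nonneg fun x _ => Set.indicator_nonneg (fun v _ => hw0 v) x

lemma nuu_mono (hw0 : ∀ v, 0 ≤ w v) {A B : Set V} (h : A ⊆ B) : nuu w A ≤ nuu w B :=
  Finset.sum_le_sum fun x _ => Set.indicator_le_indicator_of_subset h hw0 x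

lemma nuu_union_disjoint {A B : Set V} (h : Disjoint A B) :
    nuu w (A ∪ B) = nuu w A + nuu w B := by
  unfold nuu
  rw [← Finset.sum_add_distrib]
  exact Finset.sum_congr rfl fun x _ => by
    rw [Set.indicator_union_of_disjoint h]

lemma nuu_empty : nuu w (∅ : Set V) = 0 := by simp [nuu]

lemma nuu_univ (hw1 : ∑ v, w v = 1) : nuu w (Set.univ : Set V) = 1 := by
  simp [nuu, hw1]

lemma nuu_compl (hw1 : ∑ v, w v = 1) (A : Set V) : nuu w Aᶜ = 1 - nuu w A := by
  have h := nuu_union_disjoint (w := w) (disjoint_compl_right : Disjoint A Aᶜ)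
  rw [Set.union_compl_self, nuu_univ hw1] at h
  linarith

lemma nuu_union_le (hw0 : ∀ v, 0 ≤ w v) (A B : Set V) :
    nuu w (A ∪ B) ≤ nuu w A + nuu w B := by
  have h1 : A ∪ B = A ∪ (B \ A) := by rw [Set.union_diff_self]
  rw [h1, nuu_union_disjoint Set.disjoint_sdiff_right]
  have := nuu_mono hw0 (Set.diff_subset (s := B) (t := A))
  linarith

lemma gball_split (G : SimpleGraph V) (Y X : Set V) (d : ℕ) :
    gball G (Y ∪ X) d \ (Y ∪ X) ⊆ (gball G Y d \ Y) ∪ (gballAvoid G Y X d \ X) := by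
  classical
  rintro v ⟨⟨x, hx, p, hp⟩, hv⟩
  by_cases h : ∃ u ∈ p.support, u ∈ Y
  · obtain ⟨u, hu, huY⟩ := h
    left
    refine ⟨⟨u, huY, p.dropUntil u hu, le_trans (p.length_dropUntil_le hu) hp⟩, ?_⟩
    exact fun hvY => hv (Or.inl hvY)
  · push_neg at h
    have hxX : x ∈ X := by
      rcases hx with hxY | hxX
      · exact absurd hxY (h x p.start_mem_support)
      · exact hxX
    right
    exact ⟨⟨fun hvY => hv (Or.inl hvY), x, hxX, p, hp, h⟩, fun hvX => hv (Or.inr hvX)⟩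

omit [Fintype V] in
lemma self_subset_gball (G : SimpleGraph V) (X : Set V) (d : ℕ) : X ⊆ gball G X d :=
  fun v hv => ⟨v, hv, SimpleGraph.Walk.nil, by simp⟩

lemma clean_aux (G : SimpleGraph V)
    (hw0 : ∀ v, 0 ≤ w v) (hw1 : ∑ v, w v = 1)
    (d : ℕ) (ε δ : ℝ) (hε0 : 0 < ε) (hε : ε < 1 / 6) (hδ : 0 < δ)
    (hexp : ∀ X : Set V, ε < nuu w X → nuu w X < 1 - ε →
      nuu w (gball G X d) > (1 + δ) * nuu w X)
    (n : ℕ) :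
    ∀ Y : Set V, Yᶜ.ncard ≤ n → nuu w Y ≤ ε →
      nuu w (gball G Y d \ Y) ≤ δ * nuu w Y →
      ∃ Y' : Set V, nuu w Y' ≤ ε ∧
        ∀ X : Set V, X ⊆ Y'ᶜ →
          nuu w X / nuu w Y'ᶜ ≤ 1 / 2 →
          nuu w (gballAvoid G Y' X d \ X) / nuu w Y'ᶜ ≥ δ * (nuu w X / nuu w Y'ᶜ) := by
  induction n with
  | zero =>
    intro Y hn hYε _
    exfalso
    have hYc : Yᶜ = ∅ := (Set.ncard_eq_zero (Set.toFinite _)).mp (Nat.le_zero.mp hn)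
    have : Y = Set.univ := by
      rw [← Set.compl_empty, ← hYc, compl_compl]
    rw [this, nuu_univ hw1] at hYε
    linarith
  | succ n ih =>
    intro Y hn hYε hinv
    by_cases hgood : ∀ X : Set V, X ⊆ Yᶜ →
        nuu w X / nuu w Yᶜ ≤ 1 / 2 →
        nuu w (gballAvoid G Y X d \ X) / nuu w Yᶜ ≥ δ * (nuu w X / nuu w Yᶜ)
    · exact ⟨Y, hYε, hgood⟩
    push_neg at hgood
    obtain ⟨X, hXsub, hXhalf, hbad⟩ := hgood
    have hc : nuu w Yᶜ = 1 - nuu w Y := nuu_compl hw1 Y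
    have hcpos : 0 < nuu w Yᶜ := by rw [hc]; linarith
    -- from hbad : ν(ballAvoid \ X) < δ νX
    have hbad' : nuu w (gballAvoid G Y X d \ X) < δ * nuu w X := by
      rw [div_lt_iff₀ hcpos] at hbad
      calc nuu w (gballAvoid G Y X d \ X) < δ * (nuu w X / nuu w Yᶜ) * nuu w Yᶜ := hbad
        _ = δ * nuu w X := by field_simp
    have hXpos : 0 < nuu w X := by
      have h0 := nuu_nonneg hw0 (gballAvoid G Y X d \ X)
      nlinarith
    have hXhalf' : nuu w X ≤ nuu w Yᶜ / 2 := by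
      rw [div_le_iff₀ hcpos] at hXhalf
      linarith
    have hdisj : Disjoint Y X := Set.subset_compl_iff_disjoint_left.mp hXsub
    set Y' := Y ∪ X with hY'
    have hsum : nuu w Y' = nuu w Y + nuu w X := nuu_union_disjoint hdisj
    -- invariant for Y'
    have hinv' : nuu w (gball G Y' d \ Y') ≤ δ * nuu w Y' := by
      have h1 := nuu_mono hw0 (gball_split G Y X d)
      have h2 := nuu_union_le hw0 (gball G Y d \ Y) (gballAvoid G Y X d \ X)
      rw [hsum]
      nlinarith
    -- ν Y' ≤ ε
    have hY'ε : nuu w Y' ≤ ε := by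
      by_contra hcon
      push_neg at hcon
      have hYc1 : nuu w Yᶜ ≤ 1 := by
        rw [hc]
        have := nuu_nonneg hw0 Y
        linarith
      have hlt : nuu w Y' < 1 - ε := by
        rw [hsum]
        linarith
      have hexpY' := hexp Y' hcon hlt
      have hb : nuu w (gball G Y' d) ≤ nuu w Y' + nuu w (gball G Y' d \ Y') := by
        have : gball G Y' d ⊆ Y' ∪ (gball G Y' d \ Y') := by
          intro v hv
          by_cases hvY : v ∈ Y'
          · exact Or.inl hvY
          · exact Or.inr ⟨hv, hvY⟩
        calc nuu w (gball G Y' d) ≤ nuu w (Y' ∪ (gball G Y' d \ Y')) := nuu_mono hw0 this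
          _ ≤ nuu w Y' + nuu w (gball G Y' d \ Y') := nuu_union_le hw0 _ _
      have hY'pos : 0 < nuu w Y' := by linarith
      nlinarith
    -- X is nonempty
    have hXne : X.Nonempty := by
      by_contra hne
      rw [Set.not_nonempty_iff_eq_empty] at hne
      rw [hne, nuu_empty] at hXpos
      linarith
    obtain ⟨x, hx⟩ := hXne
    have hss : Y'ᶜ ⊂ Yᶜ := by
      constructor
      · intro v hv
        simp only [hY', Set.compl_union, Set.mem_inter_iff] at hv
        exact hv.1
      · intro hsub
        have : x ∈ Y'ᶜ := hsub (hXsub hx)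
        simp only [hY', Set.compl_union, Set.mem_inter_iff, Set.mem_compl_iff] at this
        exact this.2 hx
    have hcard : Y'ᶜ.ncard < Yᶜ.ncard := Set.ncard_lt_ncard hss (Set.toFinite _)
    exact ih Y' (by omega) hY'ε hinv'

end aux

theorem stmt3 {V : Type*} [Fintype V] (G : SimpleGraph V) (w : V → ℝ)
    (hw0 : ∀ v, 0 ≤ w v) (hw1 : ∑ v, w v = 1)
    (d : ℕ) (hd : 1 ≤ d) (ε δ : ℝ) (hε0 : 0 < ε) (hε : ε < 1 / 6) (hδ : 0 < δ)
    -- A is (d,ε,δ)-expanding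
    (hexp : ∀ X : Set V, ε < nuu w X → nuu w X < 1 - ε →
      nuu w (gball G X d) > (1 + δ) * nuu w X) :
    ∃ Y : Set V, nuu w Y ≤ ε ∧
      ∀ X : Set V, X ⊆ Yᶜ →
        nuu w X / nuu w Yᶜ ≤ 1 / 2 →
        nuu w (gballAvoid G Y X d \ X) / nuu w Yᶜ ≥ δ * (nuu w X / nuu w Yᶜ) := by
  have hball : gball G (∅ : Set V) d = ∅ := by
    ext v; simp [gball]
  exact clean_aux G hw0 hw1 d ε δ hε0 hε hδ hexp ((∅ : Set V)ᶜ.ncard) ∅ le_rfl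
    (by rw [nuu_empty]; linarith)
    (by rw [hball, Set.empty_diff, nuu_empty]; nlinarith)
end

section
/- Let (X_n)_{n∈ℕ} be random variables with values in [0,1]^d such that for every multi-index w ∈ ℕ^d the moments E[X_{n,1}^{w_1}⋯X_{n,d}^{w_d}] converge as n → ∞. Then (X_n) converges in distribution to a random variable X with values in [0,1]^d whose moments are the limits of the moments of X_n. -/
/-!
Transport everything to the compact cube `K = [0,1]^d`. There the space of probability
measures is compact, so `(μ n)` has a cluster point `ν`; for every polynomial `g` the integral
`∫ g ∂ν` is then a cluster point of the convergent sequence `∫ g ∂(μ n)`, hence equals its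
limit. Since polynomials in the coordinates separate the points of `K`, a probability measure
on `K` is determined by its integrals against them, so any two cluster points agree and
`(μ n)` converges weakly to `ν`.
-/

open MeasureTheory Filter Topology BoundedContinuousFunction

namespace MeasureTheory.ProbabilityMeasure

variable {X : Type*} [MeasurableSpace X] [TopologicalSpace X] [CompactSpace X] [PolishSpace X]
  [BorelSpace X]

theorem exists_tendsto_of_separatesPoints {κ : Type*} {l : Filter κ} [l.NeBot]
    {μ : κ → ProbabilityMeasure X} {A : StarSubalgebra ℝ (X →ᵇ ℝ)}
    (hA : (A.map (toContinuousMapStarₐ ℝ)).SeparatesPoints)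
    (hμ : ∀ g ∈ A, ∃ L, Tendsto (fun n ↦ ∫ x, g x ∂(μ n)) l (𝓝 L)) :
    ∃ ν : ProbabilityMeasure X, Tendsto μ l (𝓝 ν) := by
  obtain ⟨ν, hν⟩ := exists_clusterPt_of_compactSpace (l.map μ)
  refine ⟨ν, tendsto_of_tight_of_separatesPoints ℝ .of_compactSpace hA fun g hg ↦ ?_⟩
  obtain ⟨L, hL⟩ := hμ g hg
  have hνg : MapClusterPt (∫ x, g x ∂ν) l (fun n ↦ ∫ x, g x ∂(μ n)) :=
    MapClusterPt.tendsto_comp (continuous_integral_boundedContinuousFunction g).continuousAt hν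
  rwa [eq_of_nhds_neBot (hνg.clusterPt.mono hL)]

end MeasureTheory.ProbabilityMeasure

instance BoundedContinuousFunction.instTrivialStar {X β : Type*} [TopologicalSpace X]
    [NormedAddCommGroup β] [StarAddMonoid β] [NormedStarGroup β] [TrivialStar β] :
    TrivialStar (X →ᵇ β) :=
  ⟨fun f ↦ ext fun x ↦ star_trivial (f x)⟩

section Moments

variable {ι : Type*} (K : Set (ι → ℝ)) [CompactSpace K]

noncomputable def coordinateOn (j : ι) : K →ᵇ ℝ :=
  mkOfCompact ⟨fun x ↦ (x : ι → ℝ) j, (continuous_apply j).comp continuous_subtype_val⟩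

noncomputable def mvPolynomialFunctionsOn : StarSubalgebra ℝ (K →ᵇ ℝ) :=
  StarAlgebra.adjoin ℝ (Set.range (coordinateOn K))

variable {K}

theorem mvPolynomialFunctionsOn_separatesPoints :
    ((mvPolynomialFunctionsOn K).map (toContinuousMapStarₐ ℝ)).SeparatesPoints := by
  intro x y hxy
  obtain ⟨j, hj⟩ : ∃ j, (x : ι → ℝ) j ≠ (y : ι → ℝ) j := by
    by_contra! h
    exact hxy (Subtype.ext (funext h))
  exact ⟨_, ⟨_, ⟨coordinateOn K j, StarAlgebra.subset_adjoin ℝ _ ⟨j, rfl⟩, rfl⟩, rfl⟩, hj⟩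

theorem mem_mvPolynomialFunctionsOn_iff {g : K →ᵇ ℝ} :
    g ∈ mvPolynomialFunctionsOn K ↔
      ∃ p : MvPolynomial ι ℝ, MvPolynomial.aeval (coordinateOn K) p = g := by
  rw [← StarSubalgebra.mem_toSubalgebra, mvPolynomialFunctionsOn, StarAlgebra.adjoin_toSubalgebra,
    star_trivial, Set.union_self, Algebra.adjoin_range_eq_range_aeval, AlgHom.mem_range]

variable [Fintype ι] {κ : Type*} {l : Filter κ} {μ : κ → ProbabilityMeasure K}

theorem tendsto_integral_of_mem_mvPolynomialFunctionsOn
    (hμ : ∀ w : ι → ℕ, ∃ L, Tendsto (fun n ↦ ∫ x : K, ∏ j, (x : ι → ℝ) j ^ w j ∂(μ n)) l (𝓝 L))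
    {g : K →ᵇ ℝ} (hg : g ∈ mvPolynomialFunctionsOn K) :
    ∃ L, Tendsto (fun n ↦ ∫ x, g x ∂(μ n)) l (𝓝 L) := by
  obtain ⟨p, rfl⟩ := mem_mvPolynomialFunctionsOn_iff.1 hg
  clear hg
  induction p using MvPolynomial.induction_on' with
  | monomial u a =>
    obtain ⟨L, hL⟩ := hμ u
    refine ⟨a * L, ?_⟩
    simpa [MvPolynomial.aeval_monomial, Finsupp.prod_fintype, coordinateOn, integral_const_mul]
      using hL.const_mul a
  | add p q hp hq =>
    obtain ⟨Lp, hLp⟩ := hp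
    obtain ⟨Lq, hLq⟩ := hq
    refine ⟨Lp + Lq, (hLp.add hLq).congr fun n ↦ ?_⟩
    rw [map_add, coe_add, Pi.add_def, integral_add (integrable _ _) (integrable _ _)]

theorem exists_tendsto_of_tendsto_moments [l.NeBot]
    (hμ : ∀ w : ι → ℕ, ∃ L, Tendsto (fun n ↦ ∫ x : K, ∏ j, (x : ι → ℝ) j ^ w j ∂(μ n)) l (𝓝 L)) :
    ∃ ν : ProbabilityMeasure K, Tendsto μ l (𝓝 ν) :=
  ProbabilityMeasure.exists_tendsto_of_separatesPoints mvPolynomialFunctionsOn_separatesPoints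
    fun _ ↦ tendsto_integral_of_mem_mvPolynomialFunctionsOn hμ

end Moments

theorem exists_probabilityMeasure_map_subtype_val_eq {E : Type*} [MeasurableSpace E] {K : Set E}
    (hK : MeasurableSet K) (μ : Measure E) [IsProbabilityMeasure μ] (hμK : μ K = 1) :
    ∃ μK : ProbabilityMeasure K, (μK : Measure K).map (↑) = μ := by
  have hae : ∀ᵐ x ∂μ, x ∈ K := by
    rw [ae_iff, ← Set.compl_def, prob_compl_eq_zero_iff hK]
    exact hμK
  refine ⟨⟨μ.comap (↑), (MeasurableEmbedding.subtype_coe hK).isProbabilityMeasure_comap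
    (by simpa using hae)⟩, ?_⟩
  rw [ProbabilityMeasure.coe_mk, map_comap_subtype_coe hK, Measure.restrict_eq_self_of_ae_mem hae]

theorem tendsto_integral_map_subtype_val {E : Type*} [TopologicalSpace E] [MeasurableSpace E]
    [BorelSpace E] {K : Set E} (hK : MeasurableSet K) [CompactSpace K] {κ : Type*}
    {l : Filter κ} {μ : κ → ProbabilityMeasure K} {ν : ProbabilityMeasure K}
    (h : Tendsto μ l (𝓝 ν)) (f : C(E, ℝ)) :
    Tendsto (fun n ↦ ∫ x, f x ∂(μ n : Measure K).map (↑)) l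
      (𝓝 (∫ x, f x ∂(ν : Measure K).map (↑))) := by
  simp only [(MeasurableEmbedding.subtype_coe hK).integral_map]
  exact ProbabilityMeasure.tendsto_iff_forall_integral_tendsto.1 h (mkOfCompact (f.restrict K))

theorem stmt13 (d : ℕ) (μ : ℕ → Measure (Fin d → ℝ)) [∀ n, IsProbabilityMeasure (μ n)]
    (hsupp : ∀ n, μ n {x | ∀ j, x j ∈ Set.Icc (0 : ℝ) 1} = 1)
    (hmom : ∀ w : Fin d → ℕ, ∃ L : ℝ,
      Tendsto (fun n => ∫ x, ∏ j, (x j) ^ (w j) ∂ μ n) atTop (𝓝 L)) :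
    ∃ ν : Measure (Fin d → ℝ), IsProbabilityMeasure ν ∧
      ν {x | ∀ j, x j ∈ Set.Icc (0 : ℝ) 1} = 1 ∧
      -- moments of the limit are the limits of the moments
      (∀ w : Fin d → ℕ,
        Tendsto (fun n => ∫ x, ∏ j, (x j) ^ (w j) ∂ μ n) atTop
          (𝓝 (∫ x, ∏ j, (x j) ^ (w j) ∂ ν))) ∧
      -- convergence in distribution
      (∀ f : BoundedContinuousFunction (Fin d → ℝ) ℝ,
        Tendsto (fun n => ∫ x, f x ∂ μ n) atTop (𝓝 (∫ x, f x ∂ ν))) := by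
  set K : Set (Fin d → ℝ) := {x | ∀ j, x j ∈ Set.Icc (0 : ℝ) 1}
  have hK : IsCompact K := by
    simpa [K, Set.pi] using isCompact_univ_pi fun _ : Fin d ↦ isCompact_Icc (a := (0 : ℝ)) (b := 1)
  have : CompactSpace K := isCompact_iff_compactSpace.1 hK
  have hKm : MeasurableSet K := hK.isClosed.measurableSet
  choose μK hμK using fun n ↦ exists_probabilityMeasure_map_subtype_val_eq hKm (μ n) (hsupp n)
  have hmomK : ∀ w : Fin d → ℕ, ∃ L,
      Tendsto (fun n ↦ ∫ x : K, ∏ j, (x : Fin d → ℝ) j ^ w j ∂(μK n)) atTop (𝓝 L) := by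
    simpa only [← hμK, (MeasurableEmbedding.subtype_coe hKm).integral_map] using hmom
  obtain ⟨ν, hν⟩ := exists_tendsto_of_tendsto_moments hmomK
  have hlim := tendsto_integral_map_subtype_val hKm hν
  simp only [hμK] at hlim
  refine ⟨(ν : Measure K).map (↑), Measure.isProbabilityMeasure_map (by fun_prop), ?_,
    fun w ↦ hlim ⟨fun x ↦ ∏ j, x j ^ w j, by fun_prop⟩, fun f ↦ hlim f⟩
  rw [Measure.map_apply measurable_subtype_coe hKm, Subtype.coe_preimage_self, measure_univ]
end
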